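/- arXiv:0812.2625 — 7 statements merged into one kernel-verified Lean document; each statement's English description precedes it below -/
import Mathlib

section
/- Let K be a field of characteristic p > 0 and O₁ = K[x]/(x^p). The bilinear form α defined by α(x^i, x^j) = i if i + j = p and 0 otherwise satisfies the cyclic 1-cocycle condition: α(ab, c) + α(bc, a) + α(ca, b) = 0 for all a, b, c in O₁. -/
/-- the bilinear form α on O₁ = K[x]/(x^p) with α(x^i, x^j) = i
if i + j = p and 0 otherwise satisfies the cyclic 1-cocycle condition. -/
theorem stmt_1 (K : Type*) [Field K] (p : ℕ) (hp : p.Prime) [CharP K p]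
    (α : AdjoinRoot (Polynomial.X ^ p : Polynomial K) →ₗ[K]
         AdjoinRoot (Polynomial.X ^ p : Polynomial K) →ₗ[K] K)
    (hα : ∀ i j : ℕ, i < p → j < p →
      α (AdjoinRoot.root (Polynomial.X ^ p : Polynomial K) ^ i)
        (AdjoinRoot.root (Polynomial.X ^ p : Polynomial K) ^ j)
        = if i + j = p then (i : K) else 0) :
    ∀ a b c, α (a * b) c + α (b * c) a + α (c * a) b = 0 := by
  set r := AdjoinRoot.root (Polynomial.X ^ p : Polynomial K) with hr
  have hp0 : 0 < p := hp.pos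
  have hrp : r ^ p = 0 := by
    rw [hr, show AdjoinRoot.root (Polynomial.X ^ p : Polynomial K)
        = AdjoinRoot.mk _ Polynomial.X from rfl, ← map_pow, AdjoinRoot.mk_self]
  have key : ∀ m n : ℕ, α (r ^ m) (r ^ n) = if m + n = p then (m : K) else 0 := by
    intro m n
    by_cases hn : n < p
    · by_cases hm : m < p
      · exact hα m n hm hn
      · have hz : r ^ m = 0 := by
          rw [show m = p + (m - p) by omega, pow_add, hrp, zero_mul]
        rw [hz, map_zero, LinearMap.zero_apply]
        by_cases h : m + n = p
        · have hmp : m = p := by omega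
          simp [hmp, h, CharP.cast_eq_zero K p]
        · simp [h]
    · have hz : r ^ n = 0 := by
        rw [show n = p + (n - p) by omega, pow_add, hrp, zero_mul]
      rw [hz, map_zero]
      by_cases h : m + n = p
      · have hm0 : m = 0 := by omega
        simp [hm0]
      · simp [h]
  -- spanning by powers of r
  have hspan : ∀ a : AdjoinRoot (Polynomial.X ^ p : Polynomial K),
      a ∈ Submodule.span K (Set.range fun n : ℕ => r ^ n) := by
    intro a
    obtain ⟨f, rfl⟩ := AdjoinRoot.mk_surjective a
    rw [← AdjoinRoot.aeval_eq, Polynomial.aeval_eq_sum_range]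
    exact Submodule.sum_mem _ fun i _ =>
      Submodule.smul_mem _ _ (Submodule.subset_span ⟨i, rfl⟩)
  -- monomial case
  have mono : ∀ i j k : ℕ,
      α (r ^ i * r ^ j) (r ^ k) + α (r ^ j * r ^ k) (r ^ i)
        + α (r ^ k * r ^ i) (r ^ j) = 0 := by
    intro i j k
    rw [← pow_add, ← pow_add, ← pow_add, key, key, key]
    by_cases hs : i + j + k = p
    · rw [if_pos (by omega), if_pos (by omega), if_pos (by omega)]
      have h2 : ((i + j + k : ℕ) : K) = 0 := by
        rw [hs]; exact CharP.cast_eq_zero K p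
      push_cast at h2 ⊢
      linear_combination 2 * h2
    · rw [if_neg (by omega), if_neg (by omega), if_neg (by omega)]; ring
  -- now induct three times
  intro a b c
  induction hspan a using Submodule.span_induction with
  | mem a ha =>
    obtain ⟨i, rfl⟩ := ha
    induction hspan b using Submodule.span_induction with
    | mem b hb =>
      obtain ⟨j, rfl⟩ := hb
      induction hspan c using Submodule.span_induction with
      | mem c hc =>
        obtain ⟨k, rfl⟩ := hc
        exact mono i j k
      | zero => simp
      | add x y hx hy ihx ihy =>
        have : α (r ^ i * r ^ j) (x + y) + α (r ^ j * (x + y)) (r ^ i)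
            + α ((x + y) * r ^ i) (r ^ j)
            = (α (r ^ i * r ^ j) x + α (r ^ j * x) (r ^ i) + α (x * r ^ i) (r ^ j))
            + (α (r ^ i * r ^ j) y + α (r ^ j * y) (r ^ i) + α (y * r ^ i) (r ^ j)) := by
          simp [mul_add, add_mul, map_add, LinearMap.add_apply]; ring
        rw [this, ihx, ihy, add_zero]
      | smul t x hx ihx =>
        have : α (r ^ i * r ^ j) (t • x) + α (r ^ j * (t • x)) (r ^ i)
            + α ((t • x) * r ^ i) (r ^ j)
            = t • (α (r ^ i * r ^ j) x + α (r ^ j * x) (r ^ i) + α (x * r ^ i) (r ^ j)) := by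
          simp [mul_smul_comm, smul_mul_assoc, map_smul, LinearMap.smul_apply, smul_add]; ring
        rw [this, ihx, smul_zero]
    | zero => simp
    | add x y hx hy ihx ihy =>
      have : α (r ^ i * (x + y)) c + α ((x + y) * c) (r ^ i) + α (c * r ^ i) (x + y)
          = (α (r ^ i * x) c + α (x * c) (r ^ i) + α (c * r ^ i) x)
          + (α (r ^ i * y) c + α (y * c) (r ^ i) + α (c * r ^ i) y) := by
        simp [mul_add, add_mul, map_add, LinearMap.add_apply]; ring
      rw [this, ihx, ihy, add_zero]
    | smul t x hx ihx =>
      have : α (r ^ i * (t • x)) c + α ((t • x) * c) (r ^ i) + α (c * r ^ i) (t • x)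
          = t • (α (r ^ i * x) c + α (x * c) (r ^ i) + α (c * r ^ i) x) := by
        simp [mul_smul_comm, smul_mul_assoc, map_smul, LinearMap.smul_apply, smul_add]; ring
      rw [this, ihx, smul_zero]
  | zero => simp
  | add x y hx hy ihx ihy =>
    have : α ((x + y) * b) c + α (b * c) (x + y) + α (c * (x + y)) b
        = (α (x * b) c + α (b * c) x + α (c * x) b)
        + (α (y * b) c + α (b * c) y + α (c * y) b) := by
      simp [mul_add, add_mul, map_add, LinearMap.add_apply]; ring
    rw [this, ihx, ihy, add_zero]
  | smul t x hx ihx =>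
    have : α ((t • x) * b) c + α (b * c) (t • x) + α (c * (t • x)) b
        = t • (α (x * b) c + α (b * c) x + α (c * x) b) := by
      simp [mul_smul_comm, smul_mul_assoc, map_smul, LinearMap.smul_apply, smul_add]; ring
    rw [this, ihx, smul_zero]
end

section
/- Let K be a field of characteristic p > 0, O₁ = K[x]/(x^p), and α the bilinear form with α(x^i, x^j) = i when i + j = p and 0 otherwise. For every derivation D of O₁ of the form D = x^k · d/dx (k = 0, 1, ..., p-1), the form α is D-invariant: α(D(a), b) + α(a, D(b)) = 0 for all a, b in O₁. -/
/-- the bilinear form α on O₁ = K[x]/(x^p) with α(x^i, x^j) = i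
if i + j = p and 0 otherwise is invariant under every derivation of the form
x^k·d/dx (i.e., the derivation D with D(x) = x^k), for k = 0, ..., p-1. -/
theorem stmt_2 (K : Type*) [Field K] (p : ℕ) (hp : p.Prime) [CharP K p]
    (α : AdjoinRoot (Polynomial.X ^ p : Polynomial K) →ₗ[K]
         AdjoinRoot (Polynomial.X ^ p : Polynomial K) →ₗ[K] K)
    (hα : ∀ i j : ℕ, i < p → j < p →
      α (AdjoinRoot.root (Polynomial.X ^ p : Polynomial K) ^ i)
        (AdjoinRoot.root (Polynomial.X ^ p : Polynomial K) ^ j)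
        = if i + j = p then (i : K) else 0)
    (D : Derivation K (AdjoinRoot (Polynomial.X ^ p : Polynomial K))
           (AdjoinRoot (Polynomial.X ^ p : Polynomial K)))
    (hD : ∃ k : ℕ, k < p ∧
      D (AdjoinRoot.root (Polynomial.X ^ p : Polynomial K))
        = AdjoinRoot.root (Polynomial.X ^ p : Polynomial K) ^ k) :
    ∀ a b, α (D a) b + α a (D b) = 0 := by
  obtain ⟨k, hk, hDr⟩ := hD
  set r : AdjoinRoot (Polynomial.X ^ p : Polynomial K) :=
    AdjoinRoot.root (Polynomial.X ^ p : Polynomial K) with hr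
  -- r ^ p = 0
  have hrp : r ^ p = 0 := by
    have := AdjoinRoot.eval₂_root (Polynomial.X ^ p : Polynomial K)
    simpa using this
  have hpow : ∀ m : ℕ, p ≤ m → r ^ m = 0 := by
    intro m hm
    have : r ^ m = r ^ p * r ^ (m - p) := by rw [← pow_add]; congr 1; omega
    rw [this, hrp, zero_mul]
  -- α on all powers
  have key : ∀ m n : ℕ, α (r ^ m) (r ^ n) = if m + n = p then (m : K) else 0 := by
    intro m n
    by_cases hm : m < p
    · by_cases hn : n < p
      · exact hα m n hm hn
      · rw [hpow n (le_of_not_gt hn), map_zero]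
        rcases eq_or_ne (m + n) p with h | h
        · have hm0 : m = 0 := by omega
          simp [h, hm0]
        · simp [h]
    · rw [hpow m (le_of_not_gt hm), map_zero, LinearMap.zero_apply]
      rcases eq_or_ne (m + n) p with h | h
      · have hm0 : m = p := by omega
        simp [h, hm0, CharP.cast_eq_zero]
      · simp [h]
  -- D on powers
  have hDpow : ∀ i : ℕ, D (r ^ i) = i • r ^ (i - 1 + k) := by
    intro i
    rw [Derivation.leibniz_pow, hDr, smul_eq_mul, ← pow_add]
  -- main computation on powers
  have main : ∀ i j : ℕ, α (D (r ^ i)) (r ^ j) + α (r ^ i) (D (r ^ j)) = 0 := by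
    intro i j
    rw [hDpow i, hDpow j, map_nsmul, map_nsmul, LinearMap.smul_apply, key, key,
      nsmul_eq_mul, nsmul_eq_mul]
    rcases Nat.eq_zero_or_pos i with hi | hi
    · simp [hi]
    rcases Nat.eq_zero_or_pos j with hj | hj
    · subst hj
      simp only [Nat.cast_zero, zero_mul, add_zero, pow_zero]
      rcases eq_or_ne (i - 1 + k) p with h | h
      · rw [if_pos h, h]; simp
      · rw [if_neg h, mul_zero]
    by_cases h : i + j + k = p + 1
    · have h1 : i - 1 + k + j = p := by omega
      have h2 : i + (j - 1 + k) = p := by omega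
      rw [if_pos h1, if_pos h2]
      have hc : ((i - 1 + k : ℕ) : K) + (j : K) = (p : K) := by
        exact_mod_cast congrArg (Nat.cast : ℕ → K) h1
      rw [CharP.cast_eq_zero K p] at hc
      have hc' : ((i - 1 + k : ℕ) : K) = -(j : K) := by linear_combination hc
      rw [hc']; ring
    · have h1 : i - 1 + k + j ≠ p := by omega
      have h2 : i + (j - 1 + k) ≠ p := by omega
      rw [if_neg h1, if_neg h2]; ring
  -- extend to all elements by bilinearity
  have hmonic : (Polynomial.X ^ p : Polynomial K).Monic := Polynomial.monic_X_pow p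
  set pb := AdjoinRoot.powerBasis' hmonic with hpb
  have hβ : (α ∘ₗ D.toLinearMap) + α.compl₂ D.toLinearMap = 0 := by
    apply LinearMap.ext_basis pb.basis pb.basis
    intro i j
    simp only [LinearMap.add_apply, LinearMap.comp_apply, LinearMap.compl₂_apply,
      LinearMap.zero_apply, pb.basis_eq_pow, hpb, AdjoinRoot.powerBasis'_gen]
    exact main i j
  intro a b
  have := DFunLike.congr_fun (DFunLike.congr_fun hβ a) b
  simpa using this
end

section
/- Let A, B be commutative associative unital algebras over a field K, φ a cyclic 1-cocycle on A, β a linear functional on B, and ψ a cyclic 1-cocycle on B, α a linear functional on A. Then the bilinear form Φ on A ⊗ B defined by Φ(a⊗b, a'⊗b') = φ(a,a')β(bb') + α(aa')ψ(b,b') is a cyclic 1-cocycle on A ⊗ B. -/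
open TensorProduct

/-- if φ is a cyclic 1-cocycle on A, ψ a cyclic 1-cocycle on B,
α ∈ A*, β ∈ B*, then Φ(a⊗b, a'⊗b') = φ(a,a')β(bb') + α(aa')ψ(b,b') defines a
cyclic 1-cocycle on A ⊗ B. -/
theorem stmt_8 (K : Type*) [Field K]
    (A B : Type*) [CommRing A] [CommRing B] [Algebra K A] [Algebra K B]
    (φ : A →ₗ[K] A →ₗ[K] K) (ψ : B →ₗ[K] B →ₗ[K] K)
    (α : A →ₗ[K] K) (β : B →ₗ[K] K)
    (hφs : ∀ a a', φ a a' = - φ a' a)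
    (hφc : ∀ a a' a'', φ (a * a') a'' + φ (a' * a'') a + φ (a'' * a) a' = 0)
    (hψs : ∀ b b', ψ b b' = - ψ b' b)
    (hψc : ∀ b b' b'', ψ (b * b') b'' + ψ (b' * b'') b + ψ (b'' * b) b' = 0)
    (Φ : A ⊗[K] B →ₗ[K] A ⊗[K] B →ₗ[K] K)
    (hΦ : ∀ (a a' : A) (b b' : B),
      Φ (a ⊗ₜ b) (a' ⊗ₜ b') = φ a a' * β (b * b') + α (a * a') * ψ b b') :
    (∀ x y, Φ x y = - Φ y x) ∧
    (∀ x y z, Φ (x * y) z + Φ (y * z) x + Φ (z * x) y = 0) := by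
  have skew : ∀ x y, Φ x y + Φ y x = 0 := by
    intro x y
    induction x using TensorProduct.induction_on with
    | zero => simp
    | tmul a b =>
      induction y using TensorProduct.induction_on with
      | zero => simp
      | tmul a' b' =>
        rw [hΦ, hΦ, hφs a a', hψs b b', mul_comm a' a, mul_comm b' b]
        ring
      | add u v hu hv =>
        simp only [map_add, LinearMap.add_apply]
        linear_combination hu + hv
    | add u v hu hv =>
      simp only [map_add, LinearMap.add_apply]
      linear_combination hu + hv
  refine ⟨fun x y => eq_neg_of_add_eq_zero_left (skew x y), ?_⟩
  intro x y z
  induction x using TensorProduct.induction_on with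
  | zero => simp
  | add u v hu hv =>
    simp only [add_mul, mul_add, map_add, LinearMap.add_apply]
    linear_combination hu + hv
  | tmul a b =>
    induction y using TensorProduct.induction_on with
    | zero => simp
    | add u v hu hv =>
      simp only [add_mul, mul_add, map_add, LinearMap.add_apply]
      linear_combination hu + hv
    | tmul a' b' =>
      induction z using TensorProduct.induction_on with
      | zero => simp
      | add u v hu hv =>
        simp only [add_mul, mul_add, map_add, LinearMap.add_apply]
        linear_combination hu + hv
      | tmul a'' b'' =>
        rw [Algebra.TensorProduct.tmul_mul_tmul, Algebra.TensorProduct.tmul_mul_tmul,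
          Algebra.TensorProduct.tmul_mul_tmul, hΦ, hΦ, hΦ,
          show b' * b'' * b = b * b' * b'' from by ring,
          show b'' * b * b' = b * b' * b'' from by ring,
          show a' * a'' * a = a * a' * a'' from by ring,
          show a'' * a * a' = a * a' * a'' from by ring]
        linear_combination β (b * b' * b'') * hφc a a' a'' + α (a * a' * a'') * hψc b b' b''
end

section
/- Let A, B be commutative associative unital K-algebras, φ a cyclic 1-cocycle on A invariant under Der(A), ψ a cyclic 1-cocycle on B invariant under Der(B), α ∈ A* vanishing on Der(A)(A), β ∈ B* vanishing on Der(B)(B). Then the cyclic 1-cocycle Φ(a⊗b, a'⊗b') = φ(a,a')β(bb') + α(aa')ψ(b,b') on A ⊗ B is invariant under every derivation of A ⊗ B of the form D ⊗ R_b + R_a ⊗ F with D ∈ Der(A), F ∈ Der(B), a ∈ A, b ∈ B. -/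
open TensorProduct

/-- with φ a Der(A)-invariant cyclic 1-cocycle on A, ψ a
Der(B)-invariant cyclic 1-cocycle on B, α ∈ A* vanishing on Der(A)(A),
β ∈ B* vanishing on Der(B)(B), the cyclic 1-cocycle
Φ(a⊗b, a'⊗b') = φ(a,a')β(bb') + α(aa')ψ(b,b') on A ⊗ B is invariant under
every derivation of A ⊗ B of the form D ⊗ R_b + R_a ⊗ F. -/
theorem stmt_9 (K : Type*) [Field K]
    (A B : Type*) [CommRing A] [CommRing B] [Algebra K A] [Algebra K B]
    (φ : A →ₗ[K] A →ₗ[K] K) (ψ : B →ₗ[K] B →ₗ[K] K)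
    (α : A →ₗ[K] K) (β : B →ₗ[K] K)
    (hφs : ∀ a a', φ a a' = - φ a' a)
    (hφc : ∀ a a' a'', φ (a * a') a'' + φ (a' * a'') a + φ (a'' * a) a' = 0)
    (hψs : ∀ b b', ψ b b' = - ψ b' b)
    (hψc : ∀ b b' b'', ψ (b * b') b'' + ψ (b' * b'') b + ψ (b'' * b) b' = 0)
    (hφinv : ∀ (D : Derivation K A A) (a a' : A), φ (D a) a' + φ a (D a') = 0)
    (hψinv : ∀ (F : Derivation K B B) (b b' : B), ψ (F b) b' + ψ b (F b') = 0)
    (hαinv : ∀ (D : Derivation K A A) (a : A), α (D a) = 0)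
    (hβinv : ∀ (F : Derivation K B B) (b : B), β (F b) = 0)
    (Φ : A ⊗[K] B →ₗ[K] A ⊗[K] B →ₗ[K] K)
    (hΦ : ∀ (a a' : A) (b b' : B),
      Φ (a ⊗ₜ b) (a' ⊗ₜ b') = φ a a' * β (b * b') + α (a * a') * ψ b b')
    (D : Derivation K A A) (F : Derivation K B B) (a : A) (b : B)
    (δ : Derivation K (A ⊗[K] B) (A ⊗[K] B))
    (hδ : ∀ (x : A) (y : B), δ (x ⊗ₜ y) = D x ⊗ₜ (b * y) + (a * x) ⊗ₜ F y) :
    ∀ u v : A ⊗[K] B, Φ (δ u) v + Φ u (δ v) = 0 := by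

  have key : ∀ (x x' : A) (y y' : B),
      Φ (δ (x ⊗ₜ y)) (x' ⊗ₜ y') + Φ (x ⊗ₜ y) (δ (x' ⊗ₜ y')) = 0 := by
    intro x x' y y'
    have h1 : α (D x * x') = 0 := by
      simpa [smul_eq_mul, mul_comm] using hαinv (x' • D) x
    have h2 : α (x * D x') = 0 := by
      simpa [smul_eq_mul, mul_comm] using hαinv (x • D) x'
    have h3 : β (F y * y') = 0 := by
      simpa [smul_eq_mul, mul_comm] using hβinv (y' • F) y
    have h4 : β (y * F y') = 0 := by
      simpa [smul_eq_mul, mul_comm] using hβinv (y • F) y'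
    have h5 := hφinv D x x'
    have h6 := hψinv F y y'
    have e1 : (b * y) * y' = y * (b * y') := by ring
    have e2 : (a * x) * x' = x * (a * x') := by ring
    rw [hδ, hδ]
    simp only [map_add, LinearMap.add_apply, hΦ, e1, e2]
    linear_combination (β (y * (b * y'))) * h5 + (α (x * (a * x'))) * h6
      + (ψ (b * y) y') * h1 + (ψ y (b * y')) * h2
      + (φ (a * x) x') * h3 + (φ x (a * x')) * h4
  intro u v
  induction u using TensorProduct.induction_on with
  | zero => simp
  | tmul x y =>
    induction v using TensorProduct.induction_on with
    | zero => simp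
    | tmul x' y' => exact key x x' y y'
    | add v₁ v₂ h₁ h₂ =>
      simp only [map_add, LinearMap.add_apply] at h₁ h₂ ⊢
      linear_combination h₁ + h₂
  | add u₁ u₂ h₁ h₂ =>
    simp only [map_add, LinearMap.add_apply] at h₁ h₂ ⊢
    linear_combination h₁ + h₂
end

section
/- Let K be a field of characteristic p > 2 and n > 1. Every cyclic 1-cocycle on O_n = K[x₁,...,x_n]/(x₁^p,...,x_n^p) that is invariant under all derivations of O_n is zero. That is, if φ : O_n × O_n → K is skew-symmetric, satisfies φ(ab,c)+φ(bc,a)+φ(ca,b)=0, and φ(D(a),b)+φ(a,D(b))=0 for all D ∈ Der(O_n), then φ = 0. -/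
set_option synthInstance.maxHeartbeats 1000000

/-- The reduced polynomial algebra O_n = K[x₁,...,x_n]/(x₁^p,...,x_n^p). -/
abbrev TruncPolyAlg (K : Type) [Field K] (n p : ℕ) : Type :=
  MvPolynomial (Fin n) K ⧸
    Ideal.span (Set.range fun i : Fin n => (MvPolynomial.X i : MvPolynomial (Fin n) K) ^ p)

/-!
For any `g`, invariance under the derivation `g • ∂ⱼ` evaluated at `(xᵢ, xⱼ)` gives
`φ(xᵢ, g) = 0`; then invariance under `f • ∂ᵢ` evaluated at `(xᵢ, g)` gives
`φ(f, g) = -φ(xᵢ, f ∂ᵢ g) = 0`. The partial derivatives `∂ᵢ` of `K[x₁,...,x_n]` descend to `O_n`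
because in characteristic `p` every derivation kills `p`-th powers.
-/

open MvPolynomial

theorem LinearMap.eq_zero_of_forall_derivation_invariant {R A M : Type*} [CommSemiring R]
    [CommRing A] [Algebra R A] [AddCommGroup M] [Module R M] (φ : A →ₗ[R] A →ₗ[R] M)
    (hφ : ∀ (D : Derivation R A A) (a b : A), φ (D a) b + φ a (D b) = 0)
    {x y : A} {Dx Dy : Derivation R A A} (hDx : Dx x = 1) (hDyx : Dy x = 0) (hDy : Dy y = 1) :
    φ = 0 := by
  have hx : ∀ g, φ x g = 0 := fun g => by
    simpa [hDyx, hDy] using hφ (g • Dy) x y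
  ext f g
  simpa [hDx, hx] using hφ (f • Dx) x g

theorem Derivation.map_mem_span_of_forall_map_mem {R A : Type*} [CommSemiring R] [CommRing A]
    [Algebra R A] (D : Derivation R A A) {S : Set A} (hS : ∀ s ∈ S, D s ∈ Ideal.span S)
    {a : A} (ha : a ∈ Ideal.span S) : D a ∈ Ideal.span S := by
  induction ha using Submodule.span_induction with
  | mem s hs => exact hS s hs
  | zero => simp
  | add a b _ _ iha ihb => rw [map_add]; exact Ideal.add_mem _ iha ihb
  | smul c a ha iha =>
    rw [smul_eq_mul, Derivation.leibniz]
    exact Ideal.add_mem _ (Ideal.mul_mem_left _ _ iha) (Ideal.mul_mem_right _ _ ha)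

theorem Derivation.map_pow_char_eq_zero {R A : Type*} [CommSemiring R] [CommSemiring A]
    [Algebra R A] (p : ℕ) [CharP A p] (D : Derivation R A A) (a : A) : D (a ^ p) = 0 := by
  rw [D.leibniz_pow, ← Nat.cast_smul_eq_nsmul A, CharP.cast_eq_zero, zero_smul]

namespace TruncPolyAlg

variable {K : Type} [Field K] {n p : ℕ} [CharP K p]

theorem mkₐ_pderiv_eq_zero (i : Fin n) (f : MvPolynomial (Fin n) K)
    (hf : Ideal.Quotient.mkₐ K _ f = (0 : TruncPolyAlg K n p)) :
    Ideal.Quotient.mkₐ K _ (MvPolynomial.pderiv i f) = (0 : TruncPolyAlg K n p) := by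
  rw [Ideal.Quotient.mkₐ_eq_mk, Ideal.Quotient.eq_zero_iff_mem] at hf ⊢
  refine (MvPolynomial.pderiv i).map_mem_span_of_forall_map_mem ?_ hf
  rintro _ ⟨k, rfl⟩
  rw [Derivation.map_pow_char_eq_zero]
  exact Ideal.zero_mem _

noncomputable def pderiv (i : Fin n) : Derivation K (TruncPolyAlg K n p) (TruncPolyAlg K n p) :=
  Derivation.liftOfSurjective (Ideal.Quotient.mkₐ_surjective K _) (mkₐ_pderiv_eq_zero i)

theorem pderiv_mk (i : Fin n) (f : MvPolynomial (Fin n) K) :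
    pderiv (p := p) i (Ideal.Quotient.mk _ f) = Ideal.Quotient.mk _ (MvPolynomial.pderiv i f) :=
  Derivation.liftOfSurjective_apply _ (mkₐ_pderiv_eq_zero i) f

end TruncPolyAlg

theorem stmt_10_general (K : Type) [Field K] (p n : ℕ)
    [CharP K p] (hn : 1 < n)
    (φ : TruncPolyAlg K n p →ₗ[K] TruncPolyAlg K n p →ₗ[K] K)
    (hinv : ∀ (D : Derivation K (TruncPolyAlg K n p) (TruncPolyAlg K n p))
      (a b : TruncPolyAlg K n p), φ (D a) b + φ a (D b) = 0) :
    φ = 0 := by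
  let i : Fin n := ⟨0, by omega⟩
  let j : Fin n := ⟨1, hn⟩
  have hij : i ≠ j := by simp [i, j, Fin.ext_iff]
  refine φ.eq_zero_of_forall_derivation_invariant hinv (Dx := TruncPolyAlg.pderiv i)
    (Dy := TruncPolyAlg.pderiv j) (x := Ideal.Quotient.mk _ (X i)) (y := Ideal.Quotient.mk _ (X j))
    ?_ ?_ ?_ <;>
  simp only [TruncPolyAlg.pderiv_mk, pderiv_X_self, pderiv_X_of_ne hij, map_one, map_zero]

/-- for p > 2 and n > 1, every cyclic 1-cocycle on O_n
invariant under all derivations of O_n is zero. -/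
theorem stmt_10 (K : Type) [Field K] (p n : ℕ) (hp : p.Prime) (hp2 : 2 < p)
    [CharP K p] (hn : 1 < n)
    (φ : TruncPolyAlg K n p →ₗ[K] TruncPolyAlg K n p →ₗ[K] K)
    (hs : ∀ a b, φ a b = - φ b a)
    (hc : ∀ a b c, φ (a * b) c + φ (b * c) a + φ (c * a) b = 0)
    (hinv : ∀ (D : Derivation K (TruncPolyAlg K n p) (TruncPolyAlg K n p))
      (a b : TruncPolyAlg K n p), φ (D a) b + φ a (D b) = 0) :
    φ = 0 :=
  stmt_10_general K p n hn φ hinv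
end

section
/- Let K be a field of characteristic p > 0. The K-vector space of all cyclic 1-cocycles on O₁ = K[x]/(x^p), i.e., skew-symmetric bilinear forms φ with φ(ab,c)+φ(bc,a)+φ(ca,b)=0, has dimension exactly 1 if p > 2. -/
/-!
The form is the residue pairing `(f, g) ↦ Res (g df / xᵖ)`, i.e. the coefficient of `xᵖ⁻¹` in
`f' g`. In characteristic `p` the coefficient of `xᵖ⁻¹` in any derivative vanishes, so it
descends to `K[x]/(xᵖ)`, and skew-symmetry and the cocycle identity follow from
`f' g + g' f = (fg)'` and `(fg)' h + (gh)' f + (hf)' g = 2 (fgh)'`.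

Conversely, the cocycle identity with `(a, b, c) = (xⁱ, x, xʲ)` gives the recursion
`φ(xⁱ⁺¹, xʲ) = φ(xⁱ, xʲ⁺¹) - φ(xⁱ⁺ʲ, x)`, whence `φ(xⁱ, xʲ) = -i φ(xⁱ⁺ʲ⁻¹, x)`. Taking `j = 1`
shows `(n + 1) φ(xⁿ, x) = 0`, so only `φ(xᵖ⁻¹, x)` survives and `φ` is a multiple of the
residue pairing.
-/

open Polynomial

structure IsCyclicCocycle {K A : Type*} [CommRing K] [Semiring A] [Module K A]
    (φ : A →ₗ[K] A →ₗ[K] K) : Prop where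
  skew : ∀ a b, φ a b = -φ b a
  cocycle : ∀ a b c, φ (a * b) c + φ (b * c) a + φ (c * a) b = 0

namespace IsCyclicCocycle

variable {K A : Type*} [CommRing K] [Semiring A] [Module K A] {φ : A →ₗ[K] A →ₗ[K] K}

theorem apply_one (hφ : IsCyclicCocycle φ) (a : A) : φ a 1 = 0 := by
  have h := hφ.cocycle 1 1 a
  rw [one_mul, one_mul, mul_one, hφ.skew 1 a] at h
  linear_combination h

theorem apply_pow_succ_pow (hφ : IsCyclicCocycle φ) (x : A) (i j : ℕ) :
    φ (x ^ (i + 1)) (x ^ j) = φ (x ^ i) (x ^ (j + 1)) - φ (x ^ (i + j)) x := by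
  have h := hφ.cocycle (x ^ i) x (x ^ j)
  rw [← pow_succ, ← pow_succ', ← pow_add, hφ.skew (x ^ (j + 1)), add_comm j i] at h
  linear_combination h

theorem apply_pow_pow (hφ : IsCyclicCocycle φ) (x : A) {i j n : ℕ} (h : i + j = n + 1) :
    φ (x ^ i) (x ^ j) = -(i : K) * φ (x ^ n) x := by
  induction i generalizing j with
  | zero => simp [hφ.skew 1, hφ.apply_one]
  | succ i ih =>
    rw [hφ.apply_pow_succ_pow, ih (by omega), show i + j = n by omega]
    push_cast
    ring

theorem natCast_succ_mul_apply_pow (hφ : IsCyclicCocycle φ) (x : A) (n : ℕ) :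
    ((n + 1 : ℕ) : K) * φ (x ^ n) x = 0 := by
  have h := hφ.apply_pow_pow x (i := n) (j := 1) rfl
  rw [pow_one] at h
  push_cast
  linear_combination h

variable [NoZeroDivisors K] {p : ℕ} [CharP K p]

theorem apply_pow_eq_zero (hφ : IsCyclicCocycle φ) {x : A} (hx : x ^ p = 0) {n : ℕ}
    (hn : n + 1 ≠ p) : φ (x ^ n) x = 0 := by
  by_cases hpn : p ≤ n
  · rw [pow_eq_zero_of_le hpn hx, map_zero, LinearMap.zero_apply]
  · have hne : ((n + 1 : ℕ) : K) ≠ 0 := by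
      rw [Ne, CharP.cast_eq_zero_iff K p]
      intro hdvd
      have := Nat.le_of_dvd n.succ_pos hdvd
      omega
    exact (mul_eq_zero.1 (hφ.natCast_succ_mul_apply_pow x n)).resolve_left hne

theorem apply_pow_pow_of_pow_eq_zero (hφ : IsCyclicCocycle φ) {x : A} (hx : x ^ p = 0)
    (i j : ℕ) : φ (x ^ i) (x ^ j) = φ x (x ^ (p - 1)) * if i + j = p then (i : K) else 0 := by
  obtain hij | ⟨n, hn⟩ : i + j = 0 ∨ ∃ n, i + j = n + 1 := by
    rcases i + j with _ | n
    exacts [Or.inl rfl, Or.inr ⟨n, rfl⟩]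
  · obtain ⟨rfl, rfl⟩ : i = 0 ∧ j = 0 := by omega
    simp [hφ.apply_one]
  rw [hφ.apply_pow_pow x hn]
  by_cases hnp : n + 1 = p
  · subst hnp
    rw [if_pos hn, Nat.add_sub_cancel, hφ.skew (x ^ n)]
    ring
  · rw [hφ.apply_pow_eq_zero hx hnp, if_neg (by omega)]
    ring

end IsCyclicCocycle

section ResiduePairing

variable {K : Type*} [CommRing K] (p : ℕ)

noncomputable def residuePairing : K[X] →ₗ[K] K[X] →ₗ[K] K :=
  ((LinearMap.mul K K[X]).compr₂ (lcoeff K (p - 1))).comp derivative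

theorem residuePairing_apply (f g : K[X]) :
    residuePairing p f g = (derivative f * g).coeff (p - 1) :=
  rfl

variable {p}

theorem residuePairing_X_pow_mul_right (hp : p ≠ 0) (f q : K[X]) :
    residuePairing p f (X ^ p * q) = 0 := by
  rw [residuePairing_apply, mul_left_comm, coeff_X_pow_mul', if_neg (by omega)]

variable [CharP K p]

theorem coeff_derivative_pred_eq_zero (hp : p ≠ 0) (f : K[X]) :
    (derivative f).coeff (p - 1) = 0 := by
  have hcast : ((p - 1 : ℕ) : K) + 1 = 0 := by
    rw [← Nat.cast_add_one, Nat.sub_add_cancel (Nat.one_le_iff_ne_zero.2 hp), CharP.cast_eq_zero]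
  rw [coeff_derivative, hcast, mul_zero]

theorem isCyclicCocycle_residuePairing (hp : p ≠ 0) :
    IsCyclicCocycle (residuePairing (K := K) p) where
  skew f g := by
    have h := coeff_derivative_pred_eq_zero hp (f * g)
    rw [derivative_mul, coeff_add] at h
    rw [residuePairing_apply, residuePairing_apply, mul_comm (derivative g)]
    linear_combination h
  cocycle f g h := by
    have hsum : derivative (f * g) * h + derivative (g * h) * f + derivative (h * f) * g =
        derivative (f * g * h) + derivative (f * g * h) := by
      simp only [derivative_mul]
      ring
    rw [residuePairing_apply, residuePairing_apply, residuePairing_apply, ← coeff_add,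
      ← coeff_add, hsum, coeff_add, coeff_derivative_pred_eq_zero hp, add_zero]

theorem residuePairing_X_pow_mul_left (hp : p ≠ 0) (q g : K[X]) :
    residuePairing p (X ^ p * q) g = 0 := by
  rw [residuePairing_apply, derivative_mul, derivative_X_pow, CharP.cast_eq_zero, C_0,
    zero_mul, zero_mul, zero_add, mul_assoc, coeff_X_pow_mul', if_neg (by omega)]

theorem residuePairing_modByMonic (hp : p ≠ 0) (f g : K[X]) :
    residuePairing p (f %ₘ X ^ p) (g %ₘ X ^ p) = residuePairing p f g := by
  conv_rhs => rw [← modByMonic_add_div f (X ^ p), ← modByMonic_add_div g (X ^ p)]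
  simp only [map_add, LinearMap.add_apply, residuePairing_X_pow_mul_left hp,
    residuePairing_X_pow_mul_right hp, add_zero]

end ResiduePairing

section ResidueForm

variable {K : Type*} [CommRing K] (p : ℕ)

noncomputable def residueForm :
    AdjoinRoot (X ^ p : K[X]) →ₗ[K] AdjoinRoot (X ^ p : K[X]) →ₗ[K] K :=
  (residuePairing p).compl₁₂ (AdjoinRoot.modByMonicHom (monic_X_pow p))
    (AdjoinRoot.modByMonicHom (monic_X_pow p))

variable [CharP K p] {p}

theorem residueForm_mk (hp : p ≠ 0) (f g : K[X]) :
    residueForm p (AdjoinRoot.mk _ f) (AdjoinRoot.mk _ g) = residuePairing p f g := by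
  simp [residueForm, AdjoinRoot.modByMonicHom_mk, residuePairing_modByMonic hp]

theorem isCyclicCocycle_residueForm (hp : p ≠ 0) :
    IsCyclicCocycle (residueForm (K := K) p) where
  skew a b := by
    obtain ⟨f, rfl⟩ := AdjoinRoot.mk_surjective a
    obtain ⟨g, rfl⟩ := AdjoinRoot.mk_surjective b
    simp only [residueForm_mk hp, (isCyclicCocycle_residuePairing hp).skew f g]
  cocycle a b c := by
    obtain ⟨f, rfl⟩ := AdjoinRoot.mk_surjective a
    obtain ⟨g, rfl⟩ := AdjoinRoot.mk_surjective b
    obtain ⟨h, rfl⟩ := AdjoinRoot.mk_surjective c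
    simp only [← map_mul, residueForm_mk hp, (isCyclicCocycle_residuePairing hp).cocycle]

theorem residueForm_root_root_pow (hp : p ≠ 0) :
    residueForm p (AdjoinRoot.root (X ^ p : K[X])) (AdjoinRoot.root _ ^ (p - 1)) = 1 := by
  rw [← AdjoinRoot.mk_X, ← map_pow, residueForm_mk hp, residuePairing_apply]
  simp

end ResidueForm

theorem stmt_11_general (K : Type*) [Field K] (p : ℕ) (hp : p.Prime) [CharP K p] :
    ∃ α : AdjoinRoot (Polynomial.X ^ p : Polynomial K) →ₗ[K]
          AdjoinRoot (Polynomial.X ^ p : Polynomial K) →ₗ[K] K,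
      α ≠ 0 ∧
      (∀ a b, α a b = - α b a) ∧
      (∀ a b c, α (a * b) c + α (b * c) a + α (c * a) b = 0) ∧
      ∀ φ : AdjoinRoot (Polynomial.X ^ p : Polynomial K) →ₗ[K]
            AdjoinRoot (Polynomial.X ^ p : Polynomial K) →ₗ[K] K,
        (∀ a b, φ a b = - φ b a) →
        (∀ a b c, φ (a * b) c + φ (b * c) a + φ (c * a) b = 0) →
        ∃ c : K, φ = c • α := by
  have hr : AdjoinRoot.root (X ^ p : K[X]) ^ p = 0 := by
    rw [← AdjoinRoot.mk_X, ← map_pow, AdjoinRoot.mk_self]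
  set r := AdjoinRoot.root (X ^ p : K[X])
  have hα := isCyclicCocycle_residueForm (K := K) hp.ne_zero
  have hα1 := residueForm_root_root_pow (K := K) hp.ne_zero
  refine ⟨residueForm p, fun h => by simp [h] at hα1, hα.skew, hα.cocycle,
    fun φ hskew hcoc => ⟨φ r (r ^ (p - 1)), ?_⟩⟩
  have hφ : IsCyclicCocycle φ := ⟨hskew, hcoc⟩
  let B := AdjoinRoot.powerBasis (pow_ne_zero p X_ne_zero : (X ^ p : K[X]) ≠ 0)
  refine LinearMap.ext_basis B.basis B.basis fun i j => ?_
  rw [B.basis_eq_pow, B.basis_eq_pow, AdjoinRoot.powerBasis_gen, LinearMap.smul_apply,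
    LinearMap.smul_apply, hφ.apply_pow_pow_of_pow_eq_zero hr,
    hα.apply_pow_pow_of_pow_eq_zero hr, hα1, one_mul, smul_eq_mul]

/-- for p > 2, the space of cyclic 1-cocycles on
O₁ = K[x]/(x^p) (skew-symmetric bilinear forms φ with
φ(ab,c)+φ(bc,a)+φ(ca,b)=0) has dimension exactly 1: it contains a nonzero
element of which every element is a scalar multiple. -/
theorem stmt_11 (K : Type*) [Field K] (p : ℕ) (hp : p.Prime) [CharP K p]
    (hp2 : 2 < p) :
    ∃ α : AdjoinRoot (Polynomial.X ^ p : Polynomial K) →ₗ[K]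
          AdjoinRoot (Polynomial.X ^ p : Polynomial K) →ₗ[K] K,
      α ≠ 0 ∧
      (∀ a b, α a b = - α b a) ∧
      (∀ a b c, α (a * b) c + α (b * c) a + α (c * a) b = 0) ∧
      ∀ φ : AdjoinRoot (Polynomial.X ^ p : Polynomial K) →ₗ[K]
            AdjoinRoot (Polynomial.X ^ p : Polynomial K) →ₗ[K] K,
        (∀ a b, φ a b = - φ b a) →
        (∀ a b c, φ (a * b) c + φ (b * c) a + φ (c * a) b = 0) →
        ∃ c : K, φ = c • α :=
  stmt_11_general K p hp
end

section
/- Let A, B be finite-dimensional commutative associative unital algebras over a field K. Then the space of derivations satisfies dim Der(A ⊗ B) = dim(Der(A)) · dim(B) + dim(A) · dim(Der(B)), via the isomorphism Der(A ⊗ B) ≅ (Der(A) ⊗ B) ⊕ (A ⊗ Der(B)). -/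
/-!
Since `a ⊗ b = (a ⊗ 1)(1 ⊗ b)`, a derivation `D` of `A ⊗ B` is determined by its restrictions
`d₁ : A → A ⊗ B` and `d₂ : B → A ⊗ B`, and conversely any such pair glues to the derivation
`a ⊗ b ↦ d₁(a)(1 ⊗ b) + (a ⊗ 1)d₂(b)`. As an `A`-module `A ⊗ B` is free of rank `dim B`, so
`Der_K(A, A ⊗ B) ≅ Der(A)^(dim B)`, and symmetrically for `B`. This computes `dim Der(A ⊗ B)`;
the same number is the dimension of `(Der(A) ⊗ B) × (A ⊗ Der(B))`, so the two spaces are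
isomorphic.
-/

open TensorProduct Module

namespace AlgEquiv

variable {K C C' : Type*} [CommRing K] [CommRing C] [CommRing C'] [Algebra K C] [Algebra K C']

def derivationMap (e : C ≃ₐ[K] C') : Derivation K C C →ₗ[K] Derivation K C' C' where
  toFun D :=
    { toLinearMap := e.toLinearMap ∘ₗ D.toLinearMap ∘ₗ e.symm.toLinearMap
      map_one_eq_zero' := by simp
      leibniz' _ _ := by simp }
  map_add' _ _ := by ext; exact map_add e _ _
  map_smul' _ _ := by ext; exact map_smul e _ _

@[simp]
theorem derivationMap_apply (e : C ≃ₐ[K] C') (D : Derivation K C C) (x : C') :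
    e.derivationMap D x = e (D (e.symm x)) := rfl

def derivationCongr (e : C ≃ₐ[K] C') : Derivation K C C ≃ₗ[K] Derivation K C' C' :=
  { e.derivationMap with
    invFun := e.symm.derivationMap
    left_inv _ := by ext; simp
    right_inv _ := by ext; simp }

@[simp]
theorem derivationCongr_apply (e : C ≃ₐ[K] C') (D : Derivation K C C) (x : C') :
    e.derivationCongr D x = e (D (e.symm x)) := rfl

@[simp]
theorem derivationCongr_symm_apply (e : C ≃ₐ[K] C') (D : Derivation K C' C') (x : C) :
    e.derivationCongr.symm D x = e.symm (D (e x)) := rfl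

end AlgEquiv

namespace Algebra.TensorProduct

variable {K A B : Type*} [CommRing K] [CommRing A] [CommRing B] [Algebra K A] [Algebra K B]

theorem tmul_eq_tmul_one_mul_one_tmul (a : A) (b : B) :
    a ⊗ₜ[K] b = (a ⊗ₜ[K] (1 : B)) * ((1 : A) ⊗ₜ b) := by
  simp

theorem smul_eq_tmul_one_mul (a : A) (x : A ⊗[K] B) : a • x = (a ⊗ₜ[K] (1 : B)) * x := by
  simp [Algebra.smul_def]

theorem leibniz_of_tmul {M : Type*} [AddCommGroup M] [Module K M] [Module (A ⊗[K] B) M]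
    (f : A ⊗[K] B →ₗ[K] M)
    (h : ∀ (a a' : A) (b b' : B), f ((a ⊗ₜ[K] b) * (a' ⊗ₜ[K] b')) =
      (a ⊗ₜ[K] b) • f (a' ⊗ₜ[K] b') + (a' ⊗ₜ[K] b') • f (a ⊗ₜ[K] b))
    (x y : A ⊗[K] B) : f (x * y) = x • f y + y • f x := by
  induction x using TensorProduct.induction_on with
  | zero => simp
  | add x₁ x₂ h₁ h₂ => simp only [add_mul, map_add, h₁, h₂, add_smul, smul_add]; abel
  | tmul a b =>
    induction y using TensorProduct.induction_on with
    | zero => simp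
    | add y₁ y₂ h₁ h₂ => simp only [mul_add, map_add, h₁, h₂, add_smul, smul_add]; abel
    | tmul a' b' => exact h a a' b b'

theorem derivation_ext {M : Type*} [AddCommGroup M] [Module K M] [Module (A ⊗[K] B) M]
    {D D' : Derivation K (A ⊗[K] B) M} (h : ∀ a b, D (a ⊗ₜ b) = D' (a ⊗ₜ b)) : D = D' :=
  Derivation.ext fun x => x.induction_on (by simp) h fun _ _ hx hy => by simp [hx, hy]

end Algebra.TensorProduct

namespace Derivation

open Algebra.TensorProduct

variable {K A B : Type*} [CommRing K] [CommRing A] [CommRing B] [Algebra K A] [Algebra K B]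

def extendTensorLeft (d : Derivation K A (A ⊗[K] B)) : Derivation K (A ⊗[K] B) (A ⊗[K] B) where
  toLinearMap :=
    lift ((LinearMap.mul K (A ⊗[K] B)).compl₂ includeRight.toLinearMap) ∘ₗ d.toLinearMap.rTensor B
  map_one_eq_zero' := by simp [one_def]
  leibniz' := leibniz_of_tmul _ fun a a' b b' => by
    simp only [LinearMap.comp_apply, LinearMap.rTensor_tmul, coeFn_coe, lift.tmul,
      LinearMap.compl₂_apply, LinearMap.mul_apply', AlgHom.toLinearMap_apply, includeRight_apply,
      tmul_mul_tmul, leibniz, smul_eq_mul, smul_eq_tmul_one_mul]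
    have hb : (1 : A) ⊗ₜ[K] (b * b') = (1 ⊗ₜ b) * (1 ⊗ₜ b') := by simp
    rw [hb, tmul_eq_tmul_one_mul_one_tmul a b, tmul_eq_tmul_one_mul_one_tmul a' b']
    ring

@[simp]
theorem extendTensorLeft_tmul (d : Derivation K A (A ⊗[K] B)) (a : A) (b : B) :
    d.extendTensorLeft (a ⊗ₜ b) = d a * (1 ⊗ₜ b) := rfl

end Derivation

namespace Algebra.TensorProduct

variable {K A B : Type*} [CommRing K] [CommRing A] [CommRing B] [Algebra K A] [Algebra K B]

/-- The `B`-component takes values in `B ⊗ A` rather than `A ⊗ B`: only the left factor of a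
tensor product acts on it by an instance. -/
def derivationEquivProd :
    Derivation K (A ⊗[K] B) (A ⊗[K] B) ≃ₗ[K]
      Derivation K A (A ⊗[K] B) × Derivation K B (B ⊗[K] A) :=
  { LinearMap.prod ((Derivation.compAlgebraMapL K A _ _).restrictScalars K)
      ((Derivation.compAlgebraMapL K B _ _).restrictScalars K ∘ₗ
        (Algebra.TensorProduct.comm K A B).derivationCongr.toLinearMap) with
    invFun p := p.1.extendTensorLeft +
      (Algebra.TensorProduct.comm K A B).derivationCongr.symm p.2.extendTensorLeft
    left_inv D := derivation_ext fun a b => by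
      conv_rhs => rw [tmul_eq_tmul_one_mul_one_tmul a b, D.leibniz, smul_eq_mul, smul_eq_mul]
      simp [add_comm, mul_comm]
    right_inv p := by
      ext <;> simp [← one_def] }

end Algebra.TensorProduct

namespace Derivation

variable {K A M : Type*} [Field K] [CommRing A] [Algebra K A]
  [AddCommGroup M] [Module K M] [Module A M] [IsScalarTower K A M]

instance finiteDimensional [FiniteDimensional K A] [FiniteDimensional K M] :
    FiniteDimensional K (Derivation K A M) :=
  Module.Finite.of_injective
    ({ toFun D := D, map_add' _ _ := rfl, map_smul' _ _ := rfl } :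
      Derivation K A M →ₗ[K] A →ₗ[K] M)
    fun _ _ h => ext (LinearMap.congr_fun h)

variable (K A M) in
def piEquiv (ι : Type*) : Derivation K A (ι → M) ≃ₗ[A] (ι → Derivation K A M) where
  toFun D i := (LinearMap.proj i).compDer D
  invFun d := mk' (LinearMap.pi fun i => (d i : A →ₗ[K] M)) fun a b => by
    funext i; simp
  map_add' _ _ := rfl
  map_smul' _ _ := rfl
  left_inv _ := rfl
  right_inv _ := rfl

theorem finrank_eq_mul_card_of_basis [FiniteDimensional K A] {ι : Type*} [Fintype ι]
    (b : Basis ι A M) :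
    finrank K (Derivation K A M) = finrank K (Derivation K A A) * Fintype.card ι := by
  let e := (b.equivFun.compDer (R := K)).trans (piEquiv K A A ι)
  rw [(e.restrictScalars K).finrank_eq, finrank_pi_fintype]
  simp [mul_comm]

theorem finrank_tensorProduct_right [FiniteDimensional K A] (V : Type*) [AddCommGroup V]
    [Module K V] [FiniteDimensional K V] :
    finrank K (Derivation K A (A ⊗[K] V)) = finrank K (Derivation K A A) * finrank K V := by
  rw [finrank_eq_mul_card_of_basis (Algebra.TensorProduct.basis A (finBasis K V)),
    Fintype.card_fin]

end Derivation

/-- for finite-dimensional commutative unital algebras A, B over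
a field K, Der(A ⊗ B) ≅ (Der(A) ⊗ B) ⊕ (A ⊗ Der(B)), and consequently
dim Der(A ⊗ B) = dim Der(A)·dim B + dim A·dim Der(B). -/
theorem stmt_17 (K : Type*) [Field K]
    (A B : Type*) [CommRing A] [CommRing B] [Algebra K A] [Algebra K B]
    [FiniteDimensional K A] [FiniteDimensional K B] :
    Nonempty (Derivation K (A ⊗[K] B) (A ⊗[K] B) ≃ₗ[K]
        ((Derivation K A A) ⊗[K] B) × (A ⊗[K] (Derivation K B B))) ∧
    Module.finrank K (Derivation K (A ⊗[K] B) (A ⊗[K] B)) =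
      Module.finrank K (Derivation K A A) * Module.finrank K B +
        Module.finrank K A * Module.finrank K (Derivation K B B) := by
  have hrank : finrank K (Derivation K (A ⊗[K] B) (A ⊗[K] B)) =
      finrank K (Derivation K A A) * finrank K B + finrank K A * finrank K (Derivation K B B) := by
    rw [Algebra.TensorProduct.derivationEquivProd.finrank_eq, finrank_prod,
      Derivation.finrank_tensorProduct_right, Derivation.finrank_tensorProduct_right,
      mul_comm (finrank K A)]
  refine ⟨⟨.ofFinrankEq _ _ ?_⟩, hrank⟩
  rw [hrank, finrank_prod, finrank_tensorProduct, finrank_tensorProduct]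
end
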